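/- arXiv:math-ph/0609041 — 5 statements merged into one kernel-verified Lean document; each statement's English description precedes it below -/
import Mathlib

section
/- Let (M_k)_{k≥1} be a sequence of real-valued random variables on a probability space such that for every real p ≥ 1 there is a constant C_p > 0 with E|M_k|^{2p} ≤ C_p k^p for all k ≥ 1. Then there exists a random variable T taking values in the positive integers such that almost surely |M_k| ≤ k for all k ≥ T, and moreover E[T^p] < ∞ for every p ≥ 1. -/
open MeasureTheory Filter

open scoped ENNReal NNReal

/-!
Markov's inequality for the moment of order `2q` gives `k^q μ(|M_k| > k) ≤ C_q` for every `k`.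
Take `T = 1 + (the last k with |M_k| > k)`. For `q = 2` the exceptional events have summable
measures, so by Borel–Cantelli that last `k` exists almost surely. Moreover
`T^p ≤ 2^(p-1) (1 + ∑_k k^p 1{|M_k| > k})`, and `q = p + 2` makes the expectation of the right-hand
side finite.
-/

theorem ENNReal.tsum_ne_top_of_rpow_mul_le {a : ℕ → ℝ≥0∞} {q : ℝ} {C : ℝ≥0∞} (hq : 1 < q)
    (hC : C ≠ ∞) (h0 : a 0 ≠ ∞) (h : ∀ k : ℕ, (k : ℝ≥0∞) ^ q * a k ≤ C) : ∑' k : ℕ, a k ≠ ∞ := by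
  have hbound : ∀ k, a k ≤ (if k = 0 then a 0 else 0) + C * (((k : ℝ≥0) ^ q)⁻¹ : ℝ≥0) := by
    rintro (_ | k)
    · simp
    · have hk : ((k + 1 : ℕ) : ℝ≥0) ^ q ≠ 0 := by positivity
      rw [if_neg k.succ_ne_zero, zero_add, ENNReal.coe_inv hk,
        ENNReal.coe_rpow_of_nonneg _ (by linarith), ENNReal.coe_natCast, ← div_eq_mul_inv,
        ENNReal.le_div_iff_mul_le (by simp) (by simp [ENNReal.rpow_eq_top_iff]), mul_comm]
      exact h _
  refine ne_top_of_le_ne_top ?_ (ENNReal.tsum_le_tsum hbound)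
  rw [ENNReal.tsum_add, tsum_ite_eq, ENNReal.tsum_mul_left]
  exact ENNReal.add_ne_top.2 ⟨h0, ENNReal.mul_ne_top hC
    (ENNReal.tsum_coe_ne_top_iff_summable.2 (NNReal.summable_rpow_inv.2 hq))⟩

theorem ofReal_rpow_mul_measure_lt_abs_le {Ω : Type*} [MeasurableSpace Ω] {μ : Measure Ω}
    {f : Ω → ℝ} (hf : AEMeasurable f μ) {t q C : ℝ} (ht : 0 < t) (hq : 0 ≤ q)
    (h : ∫⁻ ω, ENNReal.ofReal (|f ω| ^ (2 * q)) ∂μ ≤ ENNReal.ofReal (C * t ^ q)) :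
    ENNReal.ofReal (t ^ q) * μ {ω | t < |f ω|} ≤ ENNReal.ofReal C := by
  have htq : ENNReal.ofReal (t ^ q) ≠ 0 := by simpa using Real.rpow_pos_of_pos ht q
  have hsub : {ω | t < |f ω|} ⊆
      {ω | ENNReal.ofReal (t ^ (2 * q)) ≤ ENNReal.ofReal (|f ω| ^ (2 * q))} := fun ω hω =>
    ENNReal.ofReal_le_ofReal (Real.rpow_le_rpow ht.le (le_of_lt hω) (by linarith))
  have hsq : ENNReal.ofReal (t ^ (2 * q)) = ENNReal.ofReal (t ^ q) * ENNReal.ofReal (t ^ q) := by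
    rw [two_mul, Real.rpow_add ht, ENNReal.ofReal_mul (by positivity)]
  rw [← ENNReal.mul_le_mul_iff_right htq ENNReal.ofReal_ne_top, ← mul_assoc, ← hsq,
    ← ENNReal.ofReal_mul (by positivity), mul_comm (t ^ q)]
  calc ENNReal.ofReal (t ^ (2 * q)) * μ {ω | t < |f ω|}
      ≤ ENNReal.ofReal (t ^ (2 * q)) *
          μ {ω | ENNReal.ofReal (t ^ (2 * q)) ≤ ENNReal.ofReal (|f ω| ^ (2 * q))} :=
        mul_le_mul_right (measure_mono hsub) _
    _ ≤ ∫⁻ ω, ENNReal.ofReal (|f ω| ^ (2 * q)) ∂μ :=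
        mul_meas_ge_le_lintegral₀ (hf.abs.pow_const _).ennreal_ofReal _
    _ ≤ _ := h

theorem natCast_rpow_mul_measure_lt_abs_le {Ω : Type*} [MeasurableSpace Ω] {μ : Measure Ω}
    {M : ℕ → Ω → ℝ} (hmeas : ∀ k, Measurable (M k)) {q C : ℝ} (hq : 0 < q)
    (hmom : ∀ k : ℕ, 1 ≤ k →
      ∫⁻ ω, ENNReal.ofReal (|M k ω| ^ (2 * q)) ∂μ ≤ ENNReal.ofReal (C * (k : ℝ) ^ q))
    (k : ℕ) : (k : ℝ≥0∞) ^ q * μ {ω | (k : ℝ) < |M k ω|} ≤ ENNReal.ofReal C := by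
  rcases Nat.eq_zero_or_pos k with rfl | hk
  · simp [ENNReal.zero_rpow_of_pos hq]
  · have := ofReal_rpow_mul_measure_lt_abs_le (hmeas k).aemeasurable (Nat.cast_pos.2 hk) hq.le
      (hmom k hk)
    rwa [← ENNReal.ofReal_rpow_of_nonneg (Nat.cast_nonneg k) hq.le, ENNReal.ofReal_natCast] at this

section LastVisit

variable {α : Type*} {s : ℕ → Set α} {x : α}

/-- The last `k` with `x ∈ s k`. It is `0` when there is no such `k`, and also when there are
infinitely many, since an unbounded `iSup` in `ℕ` is `0`. -/
noncomputable def lastVisit (s : ℕ → Set α) (x : α) : ℕ :=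
  ⨆ k, (s k).indicator (fun _ => k) x

theorem measurable_lastVisit [MeasurableSpace α] (hs : ∀ k, MeasurableSet (s k)) :
    Measurable (lastVisit s) :=
  Measurable.iSup fun k => measurable_const.indicator (hs k)

theorem lastVisit_mem (h : lastVisit s x ≠ 0) : x ∈ s (lastVisit s x) := by
  have hbdd : BddAbove (Set.range fun k => (s k).indicator (fun _ => k) x) := by
    by_contra hb
    exact h (Nat.iSup_of_not_bddAbove hb)
  obtain ⟨k, hk⟩ := Nat.sSup_mem (Set.range_nonempty _) hbdd
  change (s k).indicator (fun _ => k) x = lastVisit s x at hk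
  by_cases hx : x ∈ s k
  · rwa [← hk, Set.indicator_of_mem hx]
  · rw [Set.indicator_of_notMem hx] at hk
    exact absurd hk.symm h

theorem notMem_of_lastVisit_lt (hx : ∀ᶠ k in atTop, x ∉ s k) {k : ℕ} (hk : lastVisit s x < k) :
    x ∉ s k := by
  obtain ⟨N, hN⟩ := eventually_atTop.1 hx
  have hbdd : BddAbove (Set.range fun k => (s k).indicator (fun _ => k) x) := by
    refine ⟨N, Set.forall_mem_range.2 fun j => ?_⟩
    by_cases hj : x ∈ s j
    · rw [Set.indicator_of_mem hj]
      exact le_of_not_ge fun hNj => hN j hNj hj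
    · simp [Set.indicator_of_notMem hj]
  intro hxk
  have := le_ciSup hbdd k
  rw [Set.indicator_of_mem hxk] at this
  exact absurd hk (not_lt.2 this)

theorem lintegral_lastVisit_rpow_le [MeasurableSpace α] (μ : Measure α)
    (hs : ∀ k, MeasurableSet (s k)) {p : ℝ} (hp : 0 < p) :
    ∫⁻ x, (lastVisit s x : ℝ≥0∞) ^ p ∂μ ≤ ∑' k : ℕ, (k : ℝ≥0∞) ^ p * μ (s k) := by
  have hpt : ∀ x, (lastVisit s x : ℝ≥0∞) ^ p ≤
      ∑' k : ℕ, (s k).indicator (fun _ => (k : ℝ≥0∞) ^ p) x := by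
    intro x
    by_cases h : lastVisit s x = 0
    · simp [h, ENNReal.zero_rpow_of_pos hp]
    · calc (lastVisit s x : ℝ≥0∞) ^ p
          = (s (lastVisit s x)).indicator (fun _ => (lastVisit s x : ℝ≥0∞) ^ p) x :=
            (Set.indicator_of_mem (lastVisit_mem h) (fun _ => _)).symm
        _ ≤ _ := ENNReal.le_tsum (f := fun k => (s k).indicator (fun _ => (k : ℝ≥0∞) ^ p) x) _
  calc ∫⁻ x, (lastVisit s x : ℝ≥0∞) ^ p ∂μ
      ≤ ∫⁻ x, ∑' k : ℕ, (s k).indicator (fun _ => (k : ℝ≥0∞) ^ p) x ∂μ := lintegral_mono hpt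
    _ = ∑' k : ℕ, (k : ℝ≥0∞) ^ p * μ (s k) := by
        rw [lintegral_tsum fun k => (measurable_const.indicator (hs k)).aemeasurable]
        exact tsum_congr fun k => lintegral_indicator_const (hs k) _

end LastVisit

theorem lintegral_add_one_rpow_lt_top {α : Type*} [MeasurableSpace α] {μ : Measure α}
    [IsFiniteMeasure μ] {f : α → ℝ≥0∞} {p : ℝ} (hp : 1 ≤ p) (hf : ∫⁻ x, f x ^ p ∂μ < ∞) :
    ∫⁻ x, (f x + 1) ^ p ∂μ < ∞ := by
  have h2p : (2 : ℝ≥0∞) ^ (p - 1) < ∞ := ENNReal.rpow_lt_top_of_nonneg (by linarith) (by simp)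
  calc ∫⁻ x, (f x + 1) ^ p ∂μ
      ≤ ∫⁻ x, 2 ^ (p - 1) * (f x ^ p + 1) ∂μ :=
        lintegral_mono fun x => by simpa using ENNReal.rpow_add_le_mul_rpow_add_rpow (f x) 1 hp
    _ = 2 ^ (p - 1) * (∫⁻ x, f x ^ p ∂μ + μ Set.univ) := by
        rw [lintegral_const_mul' _ _ h2p.ne, lintegral_add_right _ measurable_const, lintegral_one]
    _ < ∞ := ENNReal.mul_lt_top h2p (ENNReal.add_lt_top.2 ⟨hf, measure_lt_top _ _⟩)

/-- If a sequence of real random variables satisfies `E|M_k|^{2p} ≤ C_p k^p` for every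
`p ≥ 1`, then there is a positive-integer-valued random variable `T` such that almost surely
`|M_k| ≤ k` for all `k ≥ T`, and `E[T^p] < ∞` for every `p ≥ 1`. -/
theorem stmt0 {Ω : Type*} [MeasurableSpace Ω] (μ : Measure Ω) [IsProbabilityMeasure μ]
    (M : ℕ → Ω → ℝ) (hmeas : ∀ k, Measurable (M k))
    (hmom : ∀ p : ℝ, 1 ≤ p → ∃ C : ℝ, 0 < C ∧ ∀ k : ℕ, 1 ≤ k →
      ∫⁻ ω, ENNReal.ofReal (|M k ω| ^ (2 * p)) ∂μ ≤ ENNReal.ofReal (C * (k : ℝ) ^ p)) :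
    ∃ T : Ω → ℕ, Measurable T ∧ (∀ ω, 1 ≤ T ω) ∧
      (∀ᵐ ω ∂μ, ∀ k : ℕ, T ω ≤ k → |M k ω| ≤ (k : ℝ)) ∧
      (∀ p : ℝ, 1 ≤ p → ∫⁻ ω, ENNReal.ofReal ((T ω : ℝ) ^ p) ∂μ < ⊤) := by
  set B : ℕ → Set Ω := fun k => {ω | (k : ℝ) < |M k ω|}
  have hB : ∀ k, MeasurableSet (B k) := fun k => measurableSet_lt measurable_const (hmeas k).abs
  have hBtail : ∀ q : ℝ, 1 ≤ q → ∃ C : ℝ≥0∞, C ≠ ∞ ∧ ∀ k : ℕ, (k : ℝ≥0∞) ^ q * μ (B k) ≤ C := by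
    intro q hq
    obtain ⟨C, -, hC⟩ := hmom q hq
    exact ⟨ENNReal.ofReal C, ENNReal.ofReal_ne_top,
      natCast_rpow_mul_measure_lt_abs_le hmeas (by linarith) hC⟩
  refine ⟨fun ω => lastVisit B ω + 1, (measurable_lastVisit hB).add_const 1,
    fun ω => Nat.le_add_left 1 _, ?_, ?_⟩
  · obtain ⟨C, hC, hCk⟩ := hBtail 2 one_le_two
    filter_upwards [ae_eventually_notMem
      (ENNReal.tsum_ne_top_of_rpow_mul_le one_lt_two hC (measure_ne_top μ _) hCk)] with ω hω k hk
    exact not_lt.1 (notMem_of_lastVisit_lt hω hk)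
  · intro p hp
    obtain ⟨C, hC, hCk⟩ := hBtail (p + 2) (by linarith)
    have hsum : ∑' k : ℕ, (k : ℝ≥0∞) ^ p * μ (B k) ≠ ∞ := by
      refine ENNReal.tsum_ne_top_of_rpow_mul_le one_lt_two hC
        (by simp [ENNReal.zero_rpow_of_pos (by linarith : 0 < p)]) fun k => ?_
      rw [← mul_assoc, ← ENNReal.rpow_add_of_nonneg _ _ (by norm_num) (by linarith), add_comm]
      exact hCk k
    have hT := lintegral_add_one_rpow_lt_top hp
      ((lintegral_lastVisit_rpow_le μ hB (by linarith)).trans_lt hsum.lt_top)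
    convert hT using 3 with ω
    rw [← ENNReal.ofReal_rpow_of_nonneg (Nat.cast_nonneg _) (by linarith), ENNReal.ofReal_natCast]
    push_cast
    rfl
end

section
/- Let a > 0, λ > 0 and p ≥ 1. On a probability space, let (t_k)_{k≥1} be i.i.d. random variables exponentially distributed with parameter λ, let (g_k)_{k≥1} be i.i.d. nonnegative random variables with E g_1^p < ∞, and let (h_k)_{k≥0} be nonnegative random variables such that for every k ≥ 1 the random variable t_k is independent of h_{k−1}, and such that for every ε > 0 there is a constant C_ε > 0 with h_k ≤ (1+ε) e^{−a t_k} h_{k−1} + C_ε g_k almost surely for all k ≥ 1. Then there exist constants γ ∈ (0,1) and C_p > 0, not depending on k, such that E h_k^p ≤ γ^k E h_0^p + (C_p/(1−γ)) E g_1^p for all k ≥ 0. -/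
/-!
Raise the recursion to the power `p` using the convexity bound
`(A + B)^p ≤ τ^(1-p) A^p + (1-τ)^(1-p) B^p` and take expectations: independence of `t_k` and
`h_{k-1}` splits `E[e^{-a p t_k} h_{k-1}^p]` into `λ/(λ + a p) · E h_{k-1}^p`. Since
`λ/(λ + a p) < 1`, taking `τ` close to `1` and `ε` close to `0` keeps
`γ = τ^(1-p) (1+ε)^p λ/(λ + a p)` below `1`, and iterating the linear recursion
`E h_k^p ≤ γ E h_{k-1}^p + C_p E g_1^p` gives the claim, the geometric series producing `1/(1-γ)`.
-/

open MeasureTheory ProbabilityTheory Set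
open scoped ENNReal

lemma lintegral_exp_neg_mul_expMeasure {lam c : ℝ} (hlam : 0 < lam) (hlc : 0 < lam + c) :
    ∫⁻ x, ENNReal.ofReal (Real.exp (-c * x)) ∂expMeasure lam =
      ENNReal.ofReal (lam / (lam + c)) := by
  have hdensity (x : ℝ) : exponentialPDF lam x * ENNReal.ofReal (Real.exp (-c * x)) =
      ENNReal.ofReal (lam / (lam + c)) * exponentialPDF (lam + c) x := by
    rcases lt_or_ge x 0 with hx | hx
    · simp [exponentialPDF_of_neg hx]
    · rw [exponentialPDF_of_nonneg hx, exponentialPDF_of_nonneg hx,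
        ← ENNReal.ofReal_mul (by positivity), ← ENNReal.ofReal_mul (by positivity)]
      congr 1
      rw [mul_assoc, ← Real.exp_add, show -(lam * x) + -c * x = -((lam + c) * x) by ring]
      field_simp
  have hpdf (r : ℝ) : Measurable (exponentialPDF r) :=
    (measurable_exponentialPDFReal r).ennreal_ofReal
  rw [show expMeasure lam = volume.withDensity (exponentialPDF lam) from rfl,
    lintegral_withDensity_eq_lintegral_mul _ (hpdf lam) (by fun_prop)]
  simp only [Pi.mul_apply, hdensity]
  rw [lintegral_const_mul _ (hpdf _), lintegral_exponentialPDF_eq_one hlc, mul_one]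

lemma add_rpow_le_weighted_sum {p θ A B : ℝ} (hp : 1 ≤ p) (hθ0 : 0 < θ) (hθ1 : θ < 1)
    (hA : 0 ≤ A) (hB : 0 ≤ B) :
    (A + B) ^ p ≤ θ ^ (1 - p) * A ^ p + (1 - θ) ^ (1 - p) * B ^ p := by
  have hθ1' : 0 < 1 - θ := by linarith
  have hconv := (convexOn_rpow hp).2 (mem_Ici.2 (div_nonneg hA hθ0.le))
    (mem_Ici.2 (div_nonneg hB hθ1'.le)) hθ0.le hθ1'.le (by ring)
  simp only [smul_eq_mul, mul_div_cancel₀ _ hθ0.ne', mul_div_cancel₀ _ hθ1'.ne'] at hconv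
  refine hconv.trans_eq ?_
  rw [Real.div_rpow hA hθ0.le, Real.div_rpow hB hθ1'.le, Real.rpow_sub hθ0, Real.rpow_sub hθ1',
    Real.rpow_one, Real.rpow_one]
  field_simp

lemma exists_rpow_mul_one_add_rpow_mul_lt_one (p : ℝ) {r : ℝ} (hr : r < 1) :
    ∃ τ ∈ Ioo (0 : ℝ) 1, ∃ ε > 0, τ ^ (1 - p) * (1 + ε) ^ p * r < 1 := by
  -- with `ε = τ⁻¹ - 1` the factor is continuous in `τ` and equals `r` at `τ = 1`
  have hcont : ContinuousAt (fun τ : ℝ => τ ^ (1 - p) * τ⁻¹ ^ p * r) 1 := by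
    fun_prop (disch := norm_num)
  have hlim := (hcont.tendsto.mono_left (nhdsWithin_le_nhds (s := Iio 1))).eventually
    (gt_mem_nhds (a := 1) (by simpa using hr))
  obtain ⟨τ, hτ, ⟨hτ0, hτ1⟩⟩ := (hlim.and (Ioo_mem_nhdsLT zero_lt_one)).exists
  refine ⟨τ, ⟨hτ0, hτ1⟩, τ⁻¹ - 1, sub_pos.2 (one_lt_inv₀ hτ0 |>.2 hτ1), ?_⟩
  simpa using hτ

lemma ENNReal.le_pow_mul_add_of_le_mul_add {u : ℕ → ℝ≥0∞} {r b : ℝ≥0∞}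
    (h : ∀ k, u (k + 1) ≤ r * u k + b) (k : ℕ) : u k ≤ r ^ k * u 0 + (1 - r)⁻¹ * b := by
  induction k with
  | zero => simp
  | succ k ih =>
    calc u (k + 1) ≤ r * (r ^ k * u 0 + (1 - r)⁻¹ * b) + b := (h k).trans (by gcongr)
      _ = r ^ (k + 1) * u 0 + (1 + r * (1 - r)⁻¹) * b := by ring
      _ = r ^ (k + 1) * u 0 + (1 - r)⁻¹ * b := by
        rw [← ENNReal.tsum_geometric_add_one r, ← ENNReal.tsum_geometric r,
          tsum_eq_zero_add' (f := fun n => r ^ n) ENNReal.summable, pow_zero]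

lemma lintegral_rpow_le_of_le_exp_mul_add {Ω : Type*} [MeasurableSpace Ω] {μ : Measure Ω}
    {T X Y Z : Ω → ℝ} {a lam p τ K C : ℝ} (ha : 0 ≤ a) (hlam : 0 < lam) (hp : 1 ≤ p)
    (hτ : τ ∈ Ioo 0 1) (hK : 0 ≤ K) (hC : 0 ≤ C) (hT : Measurable T) (hX : Measurable X)
    (hTX : IndepFun T X μ) (hTlaw : μ.map T = expMeasure lam)
    (hX0 : ∀ ω, 0 ≤ X ω) (hY0 : ∀ ω, 0 ≤ Y ω) (hZ0 : ∀ ω, 0 ≤ Z ω)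
    (hY : ∀ᵐ ω ∂μ, Y ω ≤ K * Real.exp (-a * T ω) * X ω + C * Z ω) :
    ∫⁻ ω, ENNReal.ofReal (Y ω ^ p) ∂μ ≤
      ENNReal.ofReal (τ ^ (1 - p) * K ^ p * (lam / (lam + a * p))) *
          ∫⁻ ω, ENNReal.ofReal (X ω ^ p) ∂μ +
        ENNReal.ofReal ((1 - τ) ^ (1 - p) * C ^ p) * ∫⁻ ω, ENNReal.ofReal (Z ω ^ p) ∂μ := by
  obtain ⟨hτ0, hτ1⟩ := hτ
  have hτ1' : 0 < 1 - τ := by linarith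
  have hp0 : 0 < p := by linarith
  have hpath : ∀ᵐ ω ∂μ, ENNReal.ofReal (Y ω ^ p) ≤
      ENNReal.ofReal (τ ^ (1 - p) * K ^ p) *
          (ENNReal.ofReal (Real.exp (-(a * p) * T ω)) * ENNReal.ofReal (X ω ^ p)) +
        ENNReal.ofReal ((1 - τ) ^ (1 - p) * C ^ p) * ENNReal.ofReal (Z ω ^ p) := by
    filter_upwards [hY] with ω hω
    have hX0 := hX0 ω
    have hZ0 := hZ0 ω
    have hconv := add_rpow_le_weighted_sum hp hτ0 hτ1 (A := K * Real.exp (-a * T ω) * X ω)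
      (B := C * Z ω) (by positivity) (by positivity)
    rw [Real.mul_rpow (by positivity) hX0, Real.mul_rpow hK (by positivity), ← Real.exp_mul,
      Real.mul_rpow hC hZ0] at hconv
    rw [← ENNReal.ofReal_mul (by positivity), ← ENNReal.ofReal_mul (by positivity),
      ← ENNReal.ofReal_mul (by positivity), ← ENNReal.ofReal_add (by positivity) (by positivity)]
    refine ENNReal.ofReal_le_ofReal ((Real.rpow_le_rpow (hY0 ω) hω hp0.le).trans
      (hconv.trans_eq ?_))
    ring_nf
  have hE : ∫⁻ ω, ENNReal.ofReal (Real.exp (-(a * p) * T ω)) ∂μ =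
      ENNReal.ofReal (lam / (lam + a * p)) := by
    rw [← lintegral_map (f := fun x => ENNReal.ofReal (Real.exp (-(a * p) * x))) (by fun_prop)
      hT, hTlaw, lintegral_exp_neg_mul_expMeasure hlam (by positivity)]
  have hEX : IndepFun (fun ω => ENNReal.ofReal (Real.exp (-(a * p) * T ω)))
      (fun ω => ENNReal.ofReal (X ω ^ p)) μ :=
    hTX.comp (φ := fun x => ENNReal.ofReal (Real.exp (-(a * p) * x)))
      (ψ := fun x => ENNReal.ofReal (x ^ p)) (by fun_prop) (by fun_prop)
  calc ∫⁻ ω, ENNReal.ofReal (Y ω ^ p) ∂μ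
      ≤ ∫⁻ ω, ENNReal.ofReal (τ ^ (1 - p) * K ^ p) *
            (ENNReal.ofReal (Real.exp (-(a * p) * T ω)) * ENNReal.ofReal (X ω ^ p)) +
          ENNReal.ofReal ((1 - τ) ^ (1 - p) * C ^ p) * ENNReal.ofReal (Z ω ^ p) ∂μ :=
        lintegral_mono_ae hpath
    _ = ENNReal.ofReal (τ ^ (1 - p) * K ^ p) * (ENNReal.ofReal (lam / (lam + a * p)) *
            ∫⁻ ω, ENNReal.ofReal (X ω ^ p) ∂μ) +
          ENNReal.ofReal ((1 - τ) ^ (1 - p) * C ^ p) * ∫⁻ ω, ENNReal.ofReal (Z ω ^ p) ∂μ := by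
      rw [lintegral_add_left (by fun_prop), lintegral_const_mul' _ _ ENNReal.ofReal_ne_top,
        lintegral_const_mul' _ _ ENNReal.ofReal_ne_top,
        lintegral_mul_eq_lintegral_mul_lintegral_of_indepFun'' (by fun_prop) (by fun_prop) hEX,
        hE]
    _ = _ := by rw [← mul_assoc, ← ENNReal.ofReal_mul (by positivity)]

theorem stmt4_general {Ω : Type*} [MeasurableSpace Ω] (μ : Measure Ω)
    (a lam p : ℝ) (ha : 0 < a) (hlam : 0 < lam) (hp : 1 ≤ p)
    (t g : ℕ → Ω → ℝ) (h : ℕ → Ω → ℝ)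
    (hmt : ∀ k, Measurable (t k)) (hmg : ∀ k, Measurable (g k)) (hmh : ∀ k, Measurable (h k))
    (htlaw : ∀ k, μ.map (t k) = expMeasure lam)
    (hglaw : ∀ k, μ.map (g k) = μ.map (g 0))
    (hgnn : ∀ k ω, 0 ≤ g k ω)
    (hhnn : ∀ k ω, 0 ≤ h k ω)
    (hth : ∀ k, IndepFun (t k) (h k) μ)
    (hrec : ∀ ε : ℝ, 0 < ε → ∃ Cε : ℝ, 0 < Cε ∧
      ∀ᵐ ω ∂μ, ∀ k : ℕ, h (k + 1) ω ≤ (1 + ε) * Real.exp (-a * t k ω) * h k ω + Cε * g k ω) :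
    ∃ γ : ℝ, 0 < γ ∧ γ < 1 ∧ ∃ Cp : ℝ, 0 < Cp ∧ ∀ k : ℕ,
      ∫⁻ ω, ENNReal.ofReal (h k ω ^ p) ∂μ ≤
        ENNReal.ofReal (γ ^ k) * ∫⁻ ω, ENNReal.ofReal (h 0 ω ^ p) ∂μ +
          ENNReal.ofReal (Cp / (1 - γ)) * ∫⁻ ω, ENNReal.ofReal (g 0 ω ^ p) ∂μ := by
  have hr1 : lam / (lam + a * p) < 1 := (div_lt_one (by positivity)).2 (by nlinarith)
  obtain ⟨τ, ⟨hτ0, hτ1⟩, ε, hε, hγ1⟩ := exists_rpow_mul_one_add_rpow_mul_lt_one p hr1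
  obtain ⟨Cε, hCε, hrec⟩ := hrec ε hε
  set γ := τ ^ (1 - p) * (1 + ε) ^ p * (lam / (lam + a * p))
  set Cp := (1 - τ) ^ (1 - p) * Cε ^ p
  have hτ1' : 0 < 1 - τ := by linarith
  have hg (k : ℕ) :
      ∫⁻ ω, ENNReal.ofReal (g k ω ^ p) ∂μ = ∫⁻ ω, ENNReal.ofReal (g 0 ω ^ p) ∂μ := by
    rw [← lintegral_map (f := fun x => ENNReal.ofReal (x ^ p)) (by fun_prop) (hmg k), hglaw,
      lintegral_map (by fun_prop) (hmg 0)]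
  have hstep (k : ℕ) := hg k ▸ lintegral_rpow_le_of_le_exp_mul_add ha.le hlam hp ⟨hτ0, hτ1⟩
    (by positivity) hCε.le (hmt k) (hmh k) (hth k) (htlaw k) (hhnn k) (hhnn (k + 1)) (hgnn k)
    (hrec.mono fun ω hω => hω k)
  refine ⟨γ, by positivity, hγ1, Cp, by positivity, fun k =>
    (ENNReal.le_pow_mul_add_of_le_mul_add hstep k).trans_eq ?_⟩
  rw [ENNReal.ofReal_pow (by positivity), ← mul_assoc, ← ENNReal.ofReal_one,
    ← ENNReal.ofReal_sub _ (by positivity), ← ENNReal.ofReal_inv_of_pos (by linarith),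
    ← ENNReal.ofReal_mul (by positivity), inv_mul_eq_div]

/-- Random Gronwall-type iteration in expectation. Here `t k`, `g k`, `h k` stand for the
`t_{k+1}`, `g_{k+1}`, `h_k` of the paper: `(t_k)` are i.i.d. exponential with rate `λ`,
`(g_k)` are i.i.d. nonnegative with `E g_1^p < ∞`, `t_{k+1}` is independent of `h_k`, and
`h_{k+1} ≤ (1+ε) e^{-a t_{k+1}} h_k + C_ε g_{k+1}` a.s. for every `ε > 0`. Then
`E h_k^p ≤ γ^k E h_0^p + (C_p/(1-γ)) E g_1^p` for some `γ ∈ (0,1)` and `C_p > 0`. -/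
theorem stmt4 {Ω : Type*} [MeasurableSpace Ω] (μ : Measure Ω) [IsProbabilityMeasure μ]
    (a lam p : ℝ) (ha : 0 < a) (hlam : 0 < lam) (hp : 1 ≤ p)
    (t g : ℕ → Ω → ℝ) (h : ℕ → Ω → ℝ)
    (hmt : ∀ k, Measurable (t k)) (hmg : ∀ k, Measurable (g k)) (hmh : ∀ k, Measurable (h k))
    (htindep : iIndepFun t μ)
    (htlaw : ∀ k, μ.map (t k) = expMeasure lam)
    (hgindep : iIndepFun g μ)
    (hglaw : ∀ k, μ.map (g k) = μ.map (g 0))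
    (hgnn : ∀ k ω, 0 ≤ g k ω)
    (hgmom : ∫⁻ ω, ENNReal.ofReal (g 0 ω ^ p) ∂μ < ⊤)
    (hhnn : ∀ k ω, 0 ≤ h k ω)
    (hth : ∀ k, IndepFun (t k) (h k) μ)
    (hrec : ∀ ε : ℝ, 0 < ε → ∃ Cε : ℝ, 0 < Cε ∧
      ∀ᵐ ω ∂μ, ∀ k : ℕ, h (k + 1) ω ≤ (1 + ε) * Real.exp (-a * t k ω) * h k ω + Cε * g k ω) :
    ∃ γ : ℝ, 0 < γ ∧ γ < 1 ∧ ∃ Cp : ℝ, 0 < Cp ∧ ∀ k : ℕ,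
      ∫⁻ ω, ENNReal.ofReal (h k ω ^ p) ∂μ ≤
        ENNReal.ofReal (γ ^ k) * ∫⁻ ω, ENNReal.ofReal (h 0 ω ^ p) ∂μ +
          ENNReal.ofReal (Cp / (1 - γ)) * ∫⁻ ω, ENNReal.ofReal (g 0 ω ^ p) ∂μ :=
  stmt4_general μ a lam p ha hlam hp t g h hmt hmg hmh htlaw hglaw hgnn hhnn hth hrec
end

section
/- Let (M_k)_{k≥0} be a real-valued martingale with respect to a filtration (F_k)_{k≥0}, with M_0 = 0, and let p ≥ 1 be a real number. If there is a constant K > 0 such that E|M_i − M_{i−1}|^{2p} ≤ K for all i ≥ 1, then there is a constant C > 0, depending only on p, such that E|M_k|^{2p} ≤ C K k^p for all k ≥ 1. -/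
/-!
Instead of Burkholder's inequality, a second-order Taylor bound for `φ(u) = |u| ^ q`, `q = 2p`:
`|x + y| ^ q ≤ |x| ^ q + q x |x| ^ (q - 2) y + c (|x| ^ (q - 2) y ^ 2 + |y| ^ q)`.
For `x = M_j` and `y = M_{j+1} - M_j` the linear term has zero expectation by the martingale
property, and Hölder's inequality with exponents `p / (p - 1)` and `p` bounds
`E |x| ^ (q - 2) y ^ 2` by `a_j ^ (1 - 1/p) K ^ (1/p)`, where `a_j = E |M_j| ^ q`. The recursion
`a_{j+1} ≤ a_j + c (a_j ^ (1 - 1/p) K ^ (1/p) + K)`, `a_1 ≤ K`, then gives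
`a_k ≤ (2c + 1) ^ p K k ^ p` by induction.
-/

open MeasureTheory Filter Set Topology

theorem hasDerivAt_mul_abs_rpow {r : ℝ} (hr : 0 ≤ r) (x : ℝ) :
    HasDerivAt (fun u => u * |u| ^ r) ((r + 1) * |x| ^ r) x := by
  rcases hr.eq_or_lt with rfl | hr
  · simpa using hasDerivAt_id' x
  rcases eq_or_ne x 0 with rfl | hx
  · -- the difference quotient at `0` is `|t| ^ r`, which tends to `0`
    rw [hasDerivAt_iff_tendsto_slope_zero]
    have hcont : Tendsto (fun t : ℝ => |t| ^ r) (𝓝[≠] 0) (𝓝 0) := by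
      have := ((continuous_abs.rpow_const fun _ => Or.inr hr.le).tendsto 0).mono_left
        (nhdsWithin_le_nhds (s := {0}ᶜ))
      simpa [Real.zero_rpow hr.ne'] using this
    refine (hcont.congr' ?_).trans (by simp [Real.zero_rpow hr.ne'])
    filter_upwards [self_mem_nhdsWithin] with t ht
    simp [inv_mul_cancel_left₀ (show t ≠ 0 from ht)]
  · have habs : |x| ≠ 0 := abs_ne_zero.2 hx
    have h := (hasDerivAt_id' x).mul ((hasDerivAt_abs hx).rpow_const (p := r) (Or.inl habs))
    refine h.congr_deriv ?_
    rw [Real.rpow_sub_one habs, show x * (SignType.sign x * r * (|x| ^ r / |x|)) =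
      x * SignType.sign x * r * |x| ^ r / |x| by ring, self_mul_sign]
    field_simp
    ring

theorem abs_mul_abs_rpow_sub_le {r R a b : ℝ} (hr : 0 ≤ r) (ha : |a| ≤ R) (hb : |b| ≤ R) :
    |a * |a| ^ r - b * |b| ^ r| ≤ (r + 1) * R ^ r * |a - b| := by
  have hbound : ∀ u ∈ Icc (-R) R, ‖(r + 1) * |u| ^ r‖ ≤ (r + 1) * R ^ r := fun u hu => by
    rw [Real.norm_of_nonneg (by positivity)]
    gcongr
    exact abs_le.2 hu
  simpa using (convex_Icc (-R) R).norm_image_sub_le_of_norm_hasDerivWithin_le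
    (fun u _ => (hasDerivAt_mul_abs_rpow hr u).hasDerivWithinAt) hbound
    (abs_le.1 hb) (abs_le.1 ha)

theorem abs_add_rpow_le_taylor {q : ℝ} (hq : 2 ≤ q) (x y : ℝ) :
    |x + y| ^ q ≤ |x| ^ q + q * (x * |x| ^ (q - 2) * y)
      + q * (q - 1) * (|x| + |y|) ^ (q - 2) * y ^ 2 := by
  set R := |x| + |y|
  have hderiv (t : ℝ) : HasDerivAt (fun t => |x + t * y| ^ q - t * (q * (x * |x| ^ (q - 2) * y)))
      (q * ((x + t * y) * |x + t * y| ^ (q - 2) - x * |x| ^ (q - 2)) * y) t := by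
    have h := ((hasDerivAt_abs_rpow (x + t * y) (by linarith)).comp t
      (((hasDerivAt_id' t).mul_const y).const_add x)).sub
      ((hasDerivAt_id' t).mul_const (q * (x * |x| ^ (q - 2) * y)))
    exact h.congr_deriv (by ring)
  have hbound (t : ℝ) (ht : t ∈ Ico (0 : ℝ) 1) :
      ‖q * ((x + t * y) * |x + t * y| ^ (q - 2) - x * |x| ^ (q - 2)) * y‖
        ≤ q * (q - 1) * R ^ (q - 2) * y ^ 2 := by
    have hty : |t| * |y| ≤ |y| := by
      rw [abs_of_nonneg ht.1]; exact mul_le_of_le_one_left (abs_nonneg y) ht.2.le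
    have hxt : |x + t * y| ≤ R := by
      calc |x + t * y| ≤ |x| + |t| * |y| := by simpa [abs_mul] using abs_add_le x (t * y)
        _ ≤ |x| + |y| := by linarith
    have hlip := abs_mul_abs_rpow_sub_le (r := q - 2) (by linarith) hxt
      (le_add_of_nonneg_right (abs_nonneg y))
    rw [show q - 2 + 1 = q - 1 by ring, add_sub_cancel_left, abs_mul] at hlip
    have hq0 : 0 ≤ q := by linarith
    have hc : 0 ≤ (q - 1) * R ^ (q - 2) := mul_nonneg (by linarith) (by positivity)
    rw [Real.norm_eq_abs, abs_mul, abs_mul, abs_of_nonneg hq0, ← sq_abs y, sq]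
    calc q * |(x + t * y) * |x + t * y| ^ (q - 2) - x * |x| ^ (q - 2)| * |y|
        ≤ q * ((q - 1) * R ^ (q - 2) * |y|) * |y| := by
          gcongr q * ?_ * |y|
          exact hlip.trans (mul_le_mul_of_nonneg_left hty hc)
      _ = q * (q - 1) * R ^ (q - 2) * (|y| * |y|) := by ring
  have := norm_image_sub_le_of_norm_deriv_le_segment_01'
    (fun t _ => (hderiv t).hasDerivWithinAt) hbound
  simp only [Real.norm_eq_abs, one_mul, zero_mul, add_zero, sub_zero] at this
  linarith [le_abs_self (|x + y| ^ q - q * (x * |x| ^ (q - 2) * y) - |x| ^ q)]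

theorem add_rpow_le_two_rpow_mul {a b s : ℝ} (ha : 0 ≤ a) (hb : 0 ≤ b) (hs : 0 ≤ s) :
    (a + b) ^ s ≤ 2 ^ s * (a ^ s + b ^ s) := calc
  (a + b) ^ s ≤ (2 * max a b) ^ s := by rw [two_mul]; gcongr <;> simp
  _ = 2 ^ s * max a b ^ s := Real.mul_rpow zero_le_two (le_max_of_le_left ha)
  _ ≤ 2 ^ s * (a ^ s + b ^ s) := by
    gcongr
    rcases le_total a b with h | h <;> simp [h] <;> positivity

theorem abs_add_rpow_le {q : ℝ} (hq : 2 ≤ q) (x y : ℝ) :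
    |x + y| ^ q ≤ |x| ^ q + q * (x * |x| ^ (q - 2) * y)
      + q * (q - 1) * 2 ^ (q - 2) * (|x| ^ (q - 2) * y ^ 2 + |y| ^ q) := by
  have hsplit := add_rpow_le_two_rpow_mul (abs_nonneg x) (abs_nonneg y) (by linarith : 0 ≤ q - 2)
  have hy : |y| ^ (q - 2) * y ^ 2 = |y| ^ q := by
    rw [← sq_abs, ← Real.rpow_two,
      ← Real.rpow_add_of_nonneg (abs_nonneg y) (by linarith) zero_le_two]
    ring_nf
  have hc : 0 ≤ q * (q - 1) := by nlinarith
  calc |x + y| ^ q ≤ |x| ^ q + q * (x * |x| ^ (q - 2) * y)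
        + q * (q - 1) * (|x| + |y|) ^ (q - 2) * y ^ 2 := abs_add_rpow_le_taylor hq x y
    _ ≤ |x| ^ q + q * (x * |x| ^ (q - 2) * y)
        + q * (q - 1) * (2 ^ (q - 2) * (|x| ^ (q - 2) + |y| ^ (q - 2))) * y ^ 2 := by gcongr
    _ = _ := by rw [← hy]; ring

theorem rpow_sub_mul_rpow_le_add {a b q s : ℝ} (ha : 0 ≤ a) (hb : 0 ≤ b) (hs : 0 ≤ s)
    (hsq : s ≤ q) : a ^ (q - s) * b ^ s ≤ a ^ q + b ^ q := by
  have hsplit (c : ℝ) (hc : 0 ≤ c) : c ^ q = c ^ (q - s) * c ^ s := by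
    rw [← Real.rpow_add_of_nonneg hc (by linarith) hs, sub_add_cancel]
  rcases le_total a b with h | h
  · calc a ^ (q - s) * b ^ s ≤ b ^ (q - s) * b ^ s := by gcongr
      _ ≤ a ^ q + b ^ q := by rw [← hsplit b hb]; linarith [Real.rpow_nonneg ha q]
  · calc a ^ (q - s) * b ^ s ≤ a ^ (q - s) * a ^ s := by gcongr
      _ ≤ a ^ q + b ^ q := by rw [← hsplit a ha]; linarith [Real.rpow_nonneg hb q]

theorem rpow_add_mul_mul_rpow_sub_one_le {p s t : ℝ} (hp : 1 ≤ p) (hs : 0 ≤ s) (ht : 0 < t) :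
    t ^ p + p * s * t ^ (p - 1) ≤ (t + s) ^ p := by
  have h := one_add_mul_self_le_rpow_one_add (s := s / t) (by linarith [div_nonneg hs ht.le]) hp
  have ht' : t ^ p * (1 + s / t) ^ p = (t + s) ^ p := by
    rw [← Real.mul_rpow ht.le (by positivity), mul_one_add, mul_div_cancel₀ _ ht.ne']
  calc t ^ p + p * s * t ^ (p - 1) = t ^ p * (1 + p * (s / t)) := by
        rw [Real.rpow_sub_one ht.ne']; field_simp
    _ ≤ (t + s) ^ p := by rw [← ht']; gcongr

theorem le_mul_rpow_of_le_add_rpow {p c K : ℝ} (hp : 1 ≤ p) (hc : 0 ≤ c) (hK : 0 ≤ K)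
    {a : ℕ → ℝ} (ha : ∀ k, 0 ≤ a k) (h1 : a 1 ≤ K)
    (hstep : ∀ j, 1 ≤ j → a (j + 1) ≤ a j + c * (a j ^ (1 - 1 / p) * K ^ (1 / p) + K))
    (k : ℕ) (hk : 1 ≤ k) : a k ≤ (2 * c + 1) ^ p * K * k ^ p := by
  set s := 2 * c + 1
  have hs : 1 ≤ s := by linarith
  have hform (j : ℕ) : s ^ p * K * (j : ℝ) ^ p = K * (s * j) ^ p := by
    rw [Real.mul_rpow (by linarith) j.cast_nonneg]; ring
  have hexp : 0 ≤ 1 - 1 / p := by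
    have : 1 / p ≤ 1 := by rw [div_le_one (by linarith)]; exact hp
    linarith
  induction k, hk using Nat.le_induction with
  | base => simpa using h1.trans (le_mul_of_one_le_left hK (Real.one_le_rpow hs (by linarith)))
  | succ j hj ih =>
    rw [hform] at ih ⊢
    set t := s * j
    have ht : 1 ≤ t := one_le_mul_of_one_le_of_one_le hs (by exact_mod_cast hj)
    have hroot : (K * t ^ p) ^ (1 - 1 / p) * K ^ (1 / p) = K * t ^ (p - 1) := by
      rw [Real.mul_rpow hK (by positivity), ← Real.rpow_mul (by positivity), mul_right_comm,
        ← Real.rpow_add' hK (by norm_num), sub_add_cancel, Real.rpow_one]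
      congr 2
      field_simp
    have htp : 1 ≤ t ^ (p - 1) := Real.one_le_rpow ht (by linarith)
    calc a (j + 1) ≤ a j + c * (a j ^ (1 - 1 / p) * K ^ (1 / p) + K) := hstep j hj
      _ ≤ K * t ^ p + c * ((K * t ^ p) ^ (1 - 1 / p) * K ^ (1 / p) + K) := by
        gcongr
        exact ha j
      _ ≤ K * (t ^ p + p * s * t ^ (p - 1)) := by
        rw [hroot]
        have hcK : c * K ≤ c * (K * t ^ (p - 1)) :=
          mul_le_mul_of_nonneg_left (le_mul_of_one_le_right hK htp) hc
        have hcs : 2 * c * (K * t ^ (p - 1)) ≤ p * s * (K * t ^ (p - 1)) :=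
          mul_le_mul_of_nonneg_right (by nlinarith) (by positivity)
        linarith
      _ ≤ K * (t + s) ^ p := by
        gcongr
        exact rpow_add_mul_mul_rpow_sub_one_le hp (by linarith) (by linarith)
      _ = K * (s * ↑(j + 1)) ^ p := by simp only [t]; push_cast; ring_nf

namespace MeasureTheory

variable {Ω : Type*} {m : MeasurableSpace Ω} {μ : Measure Ω} {X Y : Ω → ℝ}

theorem memLp_ofReal_iff_integrable_abs_rpow {q : ℝ} (hq : 0 < q) {f : Ω → ℝ}
    (hf : AEStronglyMeasurable f μ) :
    MemLp f (ENNReal.ofReal q) μ ↔ Integrable (fun ω => |f ω| ^ q) μ := by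
  rw [← integrable_norm_rpow_iff hf (by simpa using hq) ENNReal.ofReal_ne_top,
    ENNReal.toReal_ofReal hq.le]
  simp only [Real.norm_eq_abs]

theorem memLp_ofReal_of_lintegral_abs_rpow_ne_top {q : ℝ} (hq : 0 < q) {f : Ω → ℝ}
    (hf : AEStronglyMeasurable f μ) (h : ∫⁻ ω, ENNReal.ofReal (|f ω| ^ q) ∂μ ≠ ⊤) :
    MemLp f (ENNReal.ofReal q) μ :=
  (memLp_ofReal_iff_integrable_abs_rpow hq hf).2
    ⟨by fun_prop (disch := linarith),
      (hasFiniteIntegral_iff_ofReal (ae_of_all _ fun _ => by positivity)).2 h.lt_top⟩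

theorem MemLp.lintegral_ofReal_abs_rpow {q : ℝ} (hq : 0 < q) {f : Ω → ℝ}
    (hf : MemLp f (ENNReal.ofReal q) μ) :
    ∫⁻ ω, ENNReal.ofReal (|f ω| ^ q) ∂μ = ENNReal.ofReal (∫ ω, |f ω| ^ q ∂μ) :=
  (ofReal_integral_eq_lintegral_ofReal ((memLp_ofReal_iff_integrable_abs_rpow hq hf.1).1 hf)
    (ae_of_all _ fun _ => by positivity)).symm

theorem Martingale.integral_mul_sub_eq_zero {ι : Type*} [Preorder ι] [IsFiniteMeasure μ]
    {ℱ : Filtration ι m} {M : ι → Ω → ℝ} (hM : Martingale M ℱ μ) {i j : ι}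
    (hij : i ≤ j) {f : Ω → ℝ} (hf : StronglyMeasurable[ℱ i] f)
    (hfM : Integrable (f * (M j - M i)) μ) :
    ∫ ω, f ω * (M j ω - M i ω) ∂μ = 0 := by
  have hzero : μ[M j - M i | ℱ i] =ᵐ[μ] 0 := by
    filter_upwards [condExp_sub (hM.integrable j) (hM.integrable i) (ℱ i),
      hM.condExp_ae_eq hij, hM.condExp_ae_eq (le_refl i)] with ω h h1 h2
    simp [h, h1, h2]
  calc ∫ ω, f ω * (M j ω - M i ω) ∂μ = ∫ ω, μ[f * (M j - M i) | ℱ i] ω ∂μ :=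
        (integral_condExp (ℱ.le i)).symm
    _ = ∫ ω, (f * 0) ω ∂μ := integral_congr_ae <|
        (condExp_mul_of_stronglyMeasurable_left hf hfM
          ((hM.integrable j).sub (hM.integrable i))).trans (EventuallyEq.rfl.mul hzero)
    _ = 0 := by simp

theorem integrable_mul_abs_rpow_mul {q : ℝ} (hq : 2 ≤ q) (hX : MemLp X (ENNReal.ofReal q) μ)
    (hY : MemLp Y (ENNReal.ofReal q) μ) :
    Integrable (fun ω => X ω * |X ω| ^ (q - 2) * Y ω) μ := by
  have hXq := (memLp_ofReal_iff_integrable_abs_rpow (by linarith) hX.1).1 hX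
  have hYq := (memLp_ofReal_iff_integrable_abs_rpow (by linarith) hY.1).1 hY
  refine (hXq.add hYq).mono' (by have := hX.1; have := hY.1; fun_prop (disch := linarith))
    (ae_of_all _ fun ω => ?_)
  have h := rpow_sub_mul_rpow_le_add (abs_nonneg (X ω)) (abs_nonneg (Y ω)) zero_le_one
    (by linarith : (1 : ℝ) ≤ q)
  rw [Real.rpow_one, show q - 1 = q - 2 + 1 by ring,
    Real.rpow_add_one' (abs_nonneg _) (by linarith)] at h
  rw [Real.norm_eq_abs, abs_mul, abs_mul, abs_of_nonneg (by positivity : 0 ≤ |X ω| ^ (q - 2)),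
    mul_comm |X ω|]
  exact h

theorem integrable_abs_rpow_mul_sq {q : ℝ} (hq : 2 ≤ q) (hX : MemLp X (ENNReal.ofReal q) μ)
    (hY : MemLp Y (ENNReal.ofReal q) μ) :
    Integrable (fun ω => |X ω| ^ (q - 2) * Y ω ^ 2) μ := by
  have hXq := (memLp_ofReal_iff_integrable_abs_rpow (by linarith) hX.1).1 hX
  have hYq := (memLp_ofReal_iff_integrable_abs_rpow (by linarith) hY.1).1 hY
  refine (hXq.add hYq).mono' (by have := hX.1; have := hY.1; fun_prop (disch := linarith))
    (ae_of_all _ fun ω => ?_)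
  have h := rpow_sub_mul_rpow_le_add (abs_nonneg (X ω)) (abs_nonneg (Y ω)) zero_le_two hq
  rwa [Real.rpow_two, sq_abs,
    ← Real.norm_of_nonneg (by positivity : 0 ≤ |X ω| ^ (q - 2) * Y ω ^ 2)] at h

theorem integral_abs_rpow_mul_sq_le {p : ℝ} (hp : 1 ≤ p)
    (hX : MemLp X (ENNReal.ofReal (2 * p)) μ) (hY : MemLp Y (ENNReal.ofReal (2 * p)) μ) :
    ∫ ω, |X ω| ^ (2 * p - 2) * Y ω ^ 2 ∂μ ≤
      (∫ ω, |X ω| ^ (2 * p) ∂μ) ^ (1 - 1 / p)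
        * (∫ ω, |Y ω| ^ (2 * p) ∂μ) ^ (1 / p) := by
  rcases hp.eq_or_lt with rfl | hp
  · norm_num [Real.rpow_two]
  have hXq := (memLp_ofReal_iff_integrable_abs_rpow (by linarith) hX.1).1 hX
  have hYq := (memLp_ofReal_iff_integrable_abs_rpow (by linarith) hY.1).1 hY
  have hpq : (p / (p - 1)).HolderConjugate p := (Real.HolderConjugate.conjExponent hp).symm
  have hXr (ω : Ω) : (|X ω| ^ (2 * p - 2)) ^ (p / (p - 1)) = |X ω| ^ (2 * p) := by
    rw [← Real.rpow_mul (abs_nonneg _)]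
    congr 1
    field_simp [show p - 1 ≠ 0 by linarith]
  have hYp (ω : Ω) : (Y ω ^ 2) ^ p = |Y ω| ^ (2 * p) := by
    rw [← sq_abs, ← Real.rpow_two, ← Real.rpow_mul (abs_nonneg _)]
  have hfmem : MemLp (fun ω => |X ω| ^ (2 * p - 2)) (ENNReal.ofReal (p / (p - 1))) μ := by
    refine (memLp_ofReal_iff_integrable_abs_rpow hpq.pos
      (by have := hX.1; fun_prop (disch := linarith))).2 ?_
    simpa only [abs_of_nonneg (Real.rpow_nonneg (abs_nonneg _) _), hXr] using hXq
  have hgmem : MemLp (fun ω => Y ω ^ 2) (ENNReal.ofReal p) μ := by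
    refine (memLp_ofReal_iff_integrable_abs_rpow (by linarith) (by have := hY.1; fun_prop)).2 ?_
    simpa only [abs_sq, hYp] using hYq
  have h := integral_mul_le_Lp_mul_Lq_of_nonneg hpq
    (ae_of_all _ fun _ => by positivity) (ae_of_all _ fun _ => by positivity) hfmem hgmem
  simp only [hXr, hYp] at h
  convert h using 3
  field_simp

theorem integral_abs_add_rpow_le {p : ℝ} (hp : 1 ≤ p)
    (hX : MemLp X (ENNReal.ofReal (2 * p)) μ) (hY : MemLp Y (ENNReal.ofReal (2 * p)) μ)
    (horth : ∫ ω, X ω * |X ω| ^ (2 * p - 2) * Y ω ∂μ = 0) :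
    ∫ ω, |X ω + Y ω| ^ (2 * p) ∂μ ≤ ∫ ω, |X ω| ^ (2 * p) ∂μ
      + 2 * p * (2 * p - 1) * 2 ^ (2 * p - 2) *
        ((∫ ω, |X ω| ^ (2 * p) ∂μ) ^ (1 - 1 / p) * (∫ ω, |Y ω| ^ (2 * p) ∂μ) ^ (1 / p)
        + ∫ ω, |Y ω| ^ (2 * p) ∂μ) := by
  have hq : 2 ≤ 2 * p := by linarith
  set q := 2 * p
  have hXq := (memLp_ofReal_iff_integrable_abs_rpow (by linarith) hX.1).1 hX
  have hYq := (memLp_ofReal_iff_integrable_abs_rpow (by linarith) hY.1).1 hY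
  have hXYq := (memLp_ofReal_iff_integrable_abs_rpow (by linarith) (hX.1.add hY.1)).1 (hX.add hY)
  have hlin := integrable_mul_abs_rpow_mul hq hX hY
  have hquad := integrable_abs_rpow_mul_sq hq hX hY
  have hfirst : Integrable (fun ω => |X ω| ^ q + q * (X ω * |X ω| ^ (q - 2) * Y ω)) μ :=
    hXq.add (hlin.const_mul q)
  have hsecond : Integrable (fun ω => |X ω| ^ (q - 2) * Y ω ^ 2 + |Y ω| ^ q) μ := hquad.add hYq
  have hc : 0 ≤ q * (q - 1) * 2 ^ (q - 2) := by
    have : 0 ≤ q * (q - 1) := by nlinarith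
    positivity
  calc ∫ ω, |X ω + Y ω| ^ q ∂μ
      ≤ ∫ ω, (|X ω| ^ q + q * (X ω * |X ω| ^ (q - 2) * Y ω)
          + q * (q - 1) * 2 ^ (q - 2) * (|X ω| ^ (q - 2) * Y ω ^ 2 + |Y ω| ^ q)) ∂μ :=
        integral_mono hXYq (hfirst.add (hsecond.const_mul _))
          fun ω => abs_add_rpow_le hq (X ω) (Y ω)
    _ = ∫ ω, |X ω| ^ q ∂μ + q * ∫ ω, X ω * |X ω| ^ (q - 2) * Y ω ∂μ
          + q * (q - 1) * 2 ^ (q - 2) *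
            (∫ ω, |X ω| ^ (q - 2) * Y ω ^ 2 ∂μ + ∫ ω, |Y ω| ^ q ∂μ) := by
      rw [integral_add hfirst (hsecond.const_mul _),
        integral_add hXq (hlin.const_mul q), integral_const_mul, integral_const_mul,
        integral_add hquad hYq]
    _ ≤ _ := by
      rw [horth, mul_zero, add_zero]
      gcongr
      exact integral_abs_rpow_mul_sq_le hp hX hY

theorem memLp_of_memLp_sub_succ {E : Type*} [NormedAddCommGroup E] {p : ENNReal}
    {M : ℕ → Ω → E} (h0 : MemLp (M 0) p μ) (hsub : ∀ j, MemLp (M (j + 1) - M j) p μ)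
    (j : ℕ) :
    MemLp (M j) p μ := by
  induction j with
  | zero => exact h0
  | succ j ih => simpa using ih.add (hsub j)

theorem Martingale.integral_abs_rpow_succ_le [IsFiniteMeasure μ] {ℱ : Filtration ℕ m}
    {M : ℕ → Ω → ℝ} (hM : Martingale M ℱ μ) {p : ℝ} (hp : 1 ≤ p) (j : ℕ)
    (hj : MemLp (M j) (ENNReal.ofReal (2 * p)) μ)
    (hsub : MemLp (M (j + 1) - M j) (ENNReal.ofReal (2 * p)) μ) :
    ∫ ω, |M (j + 1) ω| ^ (2 * p) ∂μ ≤ ∫ ω, |M j ω| ^ (2 * p) ∂μ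
      + 2 * p * (2 * p - 1) * 2 ^ (2 * p - 2) *
        ((∫ ω, |M j ω| ^ (2 * p) ∂μ) ^ (1 - 1 / p)
            * (∫ ω, |(M (j + 1) - M j) ω| ^ (2 * p) ∂μ) ^ (1 / p)
          + ∫ ω, |(M (j + 1) - M j) ω| ^ (2 * p) ∂μ) := by
  have horth := hM.integral_mul_sub_eq_zero j.le_succ
    (f := fun ω => M j ω * |M j ω| ^ (2 * p - 2))
    (by have := hM.stronglyMeasurable j; fun_prop (disch := linarith))
    (integrable_mul_abs_rpow_mul (by linarith) hj hsub)
  simpa only [Pi.sub_apply, add_sub_cancel] using integral_abs_add_rpow_le hp hj hsub horth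

end MeasureTheory

/-- Burkholder-type moment bound for martingales: if `(M_k)` is a martingale with `M_0 = 0`
and `E|M_i − M_{i−1}|^{2p} ≤ K` for all `i ≥ 1`, then `E|M_k|^{2p} ≤ C K k^p`, where the
constant `C > 0` depends only on `p`. -/
theorem stmt5 (p : ℝ) (hp : 1 ≤ p) :
    ∃ C : ℝ, 0 < C ∧
      ∀ (Ω : Type) (m : MeasurableSpace Ω) (μ : Measure Ω), IsProbabilityMeasure μ →
        ∀ (ℱ : Filtration ℕ m) (M : ℕ → Ω → ℝ), Martingale M ℱ μ →
          (∀ ω, M 0 ω = 0) →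
          ∀ K : ℝ, 0 < K →
            (∀ i : ℕ, 1 ≤ i →
              ∫⁻ ω, ENNReal.ofReal (|M i ω - M (i - 1) ω| ^ (2 * p)) ∂μ ≤ ENNReal.ofReal K) →
            ∀ k : ℕ, 1 ≤ k →
              ∫⁻ ω, ENNReal.ofReal (|M k ω| ^ (2 * p)) ∂μ ≤
                ENNReal.ofReal (C * K * (k : ℝ) ^ p) := by
  set c := 2 * p * (2 * p - 1) * 2 ^ (2 * p - 2)
  have hc : 0 ≤ c := by
    have : 0 ≤ 2 * p * (2 * p - 1) := by nlinarith
    positivity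
  refine ⟨(2 * c + 1) ^ p, by positivity, ?_⟩
  intro Ω m μ _ ℱ M hM hM0 K hK hincr k hk
  have hq : 0 < 2 * p := by linarith
  have hincr' (j : ℕ) :
      ∫⁻ ω, ENNReal.ofReal (|(M (j + 1) - M j) ω| ^ (2 * p)) ∂μ ≤ ENNReal.ofReal K := by
    simpa using hincr (j + 1) (by omega)
  have hincrLp (j : ℕ) : MemLp (M (j + 1) - M j) (ENNReal.ofReal (2 * p)) μ :=
    memLp_ofReal_of_lintegral_abs_rpow_ne_top hq ((hM.integrable _).1.sub (hM.integrable _).1)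
      (ne_top_of_le_ne_top ENNReal.ofReal_ne_top (hincr' j))
  have hincr_le (j : ℕ) : ∫ ω, |(M (j + 1) - M j) ω| ^ (2 * p) ∂μ ≤ K := by
    simpa only [(hincrLp j).lintegral_ofReal_abs_rpow hq, ENNReal.ofReal_le_ofReal_iff hK.le]
      using hincr' j
  have hLp := memLp_of_memLp_sub_succ (by simp [show M 0 = 0 from funext hM0]) hincrLp
  have hstep (j : ℕ) (_ : 1 ≤ j) :
      ∫ ω, |M (j + 1) ω| ^ (2 * p) ∂μ ≤ ∫ ω, |M j ω| ^ (2 * p) ∂μ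
        + c * ((∫ ω, |M j ω| ^ (2 * p) ∂μ) ^ (1 - 1 / p) * K ^ (1 / p) + K) :=
    (hM.integral_abs_rpow_succ_le hp j (hLp j) (hincrLp j)).trans (by gcongr <;> exact hincr_le j)
  rw [(hLp k).lintegral_ofReal_abs_rpow hq]
  exact ENNReal.ofReal_le_ofReal <| le_mul_rpow_of_le_add_rpow hp hc hK.le
    (a := fun j => ∫ ω, |M j ω| ^ (2 * p) ∂μ)
    (fun j => integral_nonneg fun ω => by positivity) (by simpa [hM0] using hincr_le 0) hstep k hk
end

section
/- Let λ > 0 and let q ≥ 1 be a real number. On a probability space, let (t_k)_{k≥1} be i.i.d. random variables exponentially distributed with parameter λ, set τ_m = t_1 + ⋯ + t_m, and let ℓ be a random variable taking values in the positive integers (defined on the same space, not assumed independent of (t_k)) such that E ℓ^{2(q+2)} < ∞. Then E τ_{2ℓ+1}^q < ∞; more precisely, there is a constant C depending only on λ and q such that E τ_{2ℓ+1}^q ≤ C ( 1 + ( E ℓ^{2(q+2)} )^{1/2} ). -/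
/-!
Split `E τ_{2ℓ+1}^q` over the level sets `{ℓ = m}`, `m ≥ 1`. On `{ℓ = m}` Chebyshev's bound
`1_{ℓ = m} ≤ m^{-(q+2)} ℓ^{q+2}` and Cauchy–Schwarz give
`E[τ_{2m+1}^q; ℓ = m] ≤ m^{-(q+2)} (E ℓ^{2(q+2)})^{1/2} (E τ_{2m+1}^{2q})^{1/2}`,
while the power-mean inequality gives `E τ_{2m+1}^{2q} ≤ (2m+1)^{2q} E t_1^{2q}` with
`E t_1^{2q} = Γ(2q+1) / λ^{2q}`. Each level therefore contributes
`O(m^{-2}) (E ℓ^{2(q+2)})^{1/2}`, and the series over `m` converges.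
-/

open MeasureTheory ProbabilityTheory

open scoped ENNReal NNReal

theorem lintegral_ofReal_rpow_expMeasure {lam r : ℝ} (hlam : 0 < lam) (hr : 0 ≤ r) :
    ∫⁻ x, ENNReal.ofReal x ^ r ∂expMeasure lam = ENNReal.ofReal (Real.Gamma (r + 1) / lam ^ r) := by
  have hpdf : Measurable (gammaPDF 1 lam) :=
    ENNReal.measurable_ofReal.comp (measurable_gammaPDFReal 1 lam)
  have hdensity : ∀ x, gammaPDF 1 lam x * ENNReal.ofReal x ^ r
      = ENNReal.ofReal (Real.Gamma (r + 1) / lam ^ r) * gammaPDF (r + 1) lam x := by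
    intro x
    rcases lt_or_ge x 0 with hx | hx
    · simp only [gammaPDF_of_neg hx, zero_mul, mul_zero]
    have hΓ : 0 < Real.Gamma (r + 1) := Real.Gamma_pos_of_pos (by linarith)
    rw [gammaPDF_of_nonneg hx, gammaPDF_of_nonneg hx, ENNReal.ofReal_rpow_of_nonneg hx hr,
      ← ENNReal.ofReal_mul (by positivity), ← ENNReal.ofReal_mul (by positivity)]
    congr 1
    simp only [Real.Gamma_one, Real.rpow_one, sub_self, Real.rpow_zero, add_sub_cancel_right,
      div_one, mul_one, Real.rpow_add hlam]
    field_simp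
  rw [expMeasure, gammaMeasure, lintegral_withDensity_eq_lintegral_mul₀ hpdf.aemeasurable
      (by fun_prop)]
  simp only [Pi.mul_apply, hdensity]
  rw [lintegral_const_mul' _ _ ENNReal.ofReal_ne_top,
    lintegral_gammaPDF_eq_one (by linarith) hlam, mul_one]

theorem ae_nonneg_of_map_eq_expMeasure {Ω : Type*} [MeasurableSpace Ω] {μ : Measure Ω}
    {X : Ω → ℝ} (hX : AEMeasurable X μ) {lam : ℝ} (hmap : μ.map X = expMeasure lam) :
    ∀ᵐ ω ∂μ, 0 ≤ X ω := by
  refine ae_of_ae_map hX ?_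
  rw [hmap, ae_iff]
  simp only [not_le]
  change expMeasure lam (Set.Iio 0) = 0
  rw [expMeasure, gammaMeasure, withDensity_apply _ measurableSet_Iio]
  exact lintegral_gammaPDF_of_nonpos le_rfl

theorem ENNReal.ofReal_sum_rpow {ι : Type*} {s : Finset ι} {f : ι → ℝ} (hf : ∀ i ∈ s, 0 ≤ f i)
    {p : ℝ} (hp : 0 ≤ p) :
    ENNReal.ofReal ((∑ i ∈ s, f i) ^ p) = (∑ i ∈ s, ENNReal.ofReal (f i)) ^ p := by
  rw [← ENNReal.ofReal_rpow_of_nonneg (Finset.sum_nonneg hf) hp, ENNReal.ofReal_sum_of_nonneg hf]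

theorem ENNReal.tsum_natCast_add_one_rpow_neg_ne_top {p : ℝ} (hp : 1 < p) :
    ∑' n : ℕ, ((n : ℝ≥0∞) + 1) ^ (-p) ≠ ⊤ := by
  have hsummable : Summable fun n : ℕ => ((n : ℝ≥0) + 1) ^ (-p) := by
    have := (NNReal.summable_nat_add_iff 1).2 (NNReal.summable_rpow.2 (neg_lt_neg hp))
    simpa only [Nat.cast_add, Nat.cast_one] using this
  have hcoe : ∀ n : ℕ, ((n : ℝ≥0∞) + 1) ^ (-p) = (((n : ℝ≥0) + 1) ^ (-p) : ℝ≥0) := fun n => by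
    rw [ENNReal.coe_rpow_of_ne_zero (by positivity)]
    push_cast
    rfl
  simpa only [hcoe] using ENNReal.tsum_coe_ne_top_iff_summable.2 hsummable

section Moments

variable {Ω : Type*} [MeasurableSpace Ω] {μ : Measure Ω}

theorem lintegral_rpow_sum_le {ι : Type*} (s : Finset ι) {f : ι → Ω → ℝ≥0∞}
    (hf : ∀ i, AEMeasurable (f i) μ) {p : ℝ} (hp : 1 ≤ p) {M : ℝ≥0∞}
    (hM : ∀ i ∈ s, ∫⁻ ω, f i ω ^ p ∂μ ≤ M) :
    ∫⁻ ω, (∑ i ∈ s, f i ω) ^ p ∂μ ≤ (s.card : ℝ≥0∞) ^ p * M := by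
  calc ∫⁻ ω, (∑ i ∈ s, f i ω) ^ p ∂μ
      ≤ ∫⁻ ω, (s.card : ℝ≥0∞) ^ (p - 1) * ∑ i ∈ s, f i ω ^ p ∂μ :=
        lintegral_mono fun ω => ENNReal.rpow_sum_le_const_mul_sum_rpow s (f · ω) hp
    _ = (s.card : ℝ≥0∞) ^ (p - 1) * ∑ i ∈ s, ∫⁻ ω, f i ω ^ p ∂μ := by
        rw [lintegral_const_mul' _ _
            (ENNReal.rpow_ne_top_of_nonneg (by linarith) (ENNReal.natCast_ne_top _)),
          lintegral_finsetSum' _ fun i _ => (hf i).pow_const p]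
    _ ≤ (s.card : ℝ≥0∞) ^ (p - 1) * (s.card * M) := by
        gcongr
        simpa only [nsmul_eq_mul] using Finset.sum_le_card_nsmul s _ M hM
    _ = (s.card : ℝ≥0∞) ^ p * M := by
        conv_rhs => rw [← sub_add_cancel p 1, ENNReal.rpow_add_of_nonneg _ _ (by linarith)
          zero_le_one, ENNReal.rpow_one]
        ring

theorem lintegral_indicator_preimage_singleton_le {ℓ : Ω → ℕ} (hℓ : Measurable ℓ)
    {G : Ω → ℝ≥0∞} (hG : AEMeasurable G μ) {m : ℕ} (hm : m ≠ 0) (s : ℝ) :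
    ∫⁻ ω, (ℓ ⁻¹' {m}).indicator G ω ∂μ ≤
      (m : ℝ≥0∞) ^ (-s) * (∫⁻ ω, (ℓ ω : ℝ≥0∞) ^ (2 * s) ∂μ) ^ (1 / 2 : ℝ) *
        (∫⁻ ω, G ω ^ (2 : ℝ) ∂μ) ^ (1 / 2 : ℝ) := by
  have hm0 : (m : ℝ≥0∞) ≠ 0 := by exact_mod_cast hm
  have hlevel : ∀ ω,
      (ℓ ⁻¹' {m}).indicator G ω ≤ (m : ℝ≥0∞) ^ (-s) * ((ℓ ω : ℝ≥0∞) ^ s * G ω) := by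
    intro ω
    by_cases hω : ℓ ω = m
    · rw [Set.indicator_of_mem (by simpa using hω), hω, ← mul_assoc,
        ← ENNReal.rpow_add _ _ hm0 (ENNReal.natCast_ne_top m), neg_add_cancel, ENNReal.rpow_zero,
        one_mul]
    · rw [Set.indicator_of_notMem (by simpa using hω)]
      exact zero_le
  have hℓs : AEMeasurable (fun ω => (ℓ ω : ℝ≥0∞) ^ s) μ :=
    (measurable_from_top.comp hℓ).aemeasurable.pow_const s
  calc ∫⁻ ω, (ℓ ⁻¹' {m}).indicator G ω ∂μ
      ≤ ∫⁻ ω, (m : ℝ≥0∞) ^ (-s) * ((ℓ ω : ℝ≥0∞) ^ s * G ω) ∂μ := lintegral_mono hlevel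
    _ = (m : ℝ≥0∞) ^ (-s) * ∫⁻ ω, (ℓ ω : ℝ≥0∞) ^ s * G ω ∂μ :=
        lintegral_const_mul' _ _ (by simp [ENNReal.rpow_neg, hm0])
    _ ≤ (m : ℝ≥0∞) ^ (-s) * ((∫⁻ ω, ((ℓ ω : ℝ≥0∞) ^ s) ^ (2 : ℝ) ∂μ) ^ (1 / 2 : ℝ) *
          (∫⁻ ω, G ω ^ (2 : ℝ) ∂μ) ^ (1 / 2 : ℝ)) := by
        gcongr
        exact ENNReal.lintegral_mul_le_Lp_mul_Lq μ .two_two hℓs hG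
    _ = _ := by simp only [← ENNReal.rpow_mul, mul_comm s 2, mul_assoc]

theorem lintegral_comp_eq_tsum_indicator {F : ℕ → Ω → ℝ≥0∞} (hF : ∀ n, AEMeasurable (F n) μ)
    {ℓ : Ω → ℕ} (hℓ : Measurable ℓ) (hℓ1 : ∀ ω, 1 ≤ ℓ ω) :
    ∫⁻ ω, F (ℓ ω) ω ∂μ = ∑' n, ∫⁻ ω, (ℓ ⁻¹' {n + 1}).indicator (F (n + 1)) ω ∂μ := by
  rw [← lintegral_tsum fun n => (hF _).indicator (hℓ (measurableSet_singleton _))]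
  congr 1 with ω
  rw [tsum_eq_single (ℓ ω - 1) fun n hn => Set.indicator_of_notMem
      (by simp only [Set.mem_preimage, Set.mem_singleton_iff]; omega) _,
    Set.indicator_of_mem (by simp [Nat.sub_add_cancel (hℓ1 ω)]), Nat.sub_add_cancel (hℓ1 ω)]

theorem lintegral_rpow_sum_ofReal_le_of_map_eq_expMeasure {lam p : ℝ} (hlam : 0 < lam)
    (hp : 1 ≤ p) {t : ℕ → Ω → ℝ} (ht : ∀ k, Measurable (t k))
    (hmap : ∀ k, μ.map (t k) = expMeasure lam) (m : ℕ) :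
    ∫⁻ ω, (∑ i ∈ Finset.range m, ENNReal.ofReal (t i ω)) ^ p ∂μ ≤
      (m : ℝ≥0∞) ^ p * ENNReal.ofReal (Real.Gamma (p + 1) / lam ^ p) := by
  simpa only [Finset.card_range] using lintegral_rpow_sum_le (Finset.range m)
    (fun i => (ht i).ennreal_ofReal.aemeasurable) hp fun i _ => by
      rw [← lintegral_ofReal_rpow_expMeasure hlam (by linarith), ← hmap i,
        lintegral_map (by fun_prop) (ht i)]

theorem natCast_rpow_neg_mul_rpow_le {q : ℝ} (hq : 0 ≤ q) {m : ℕ} (hm : m ≠ 0) (M : ℝ≥0∞) :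
    (m : ℝ≥0∞) ^ (-(q + 2)) * (((2 * m + 1 : ℕ) : ℝ≥0∞) ^ (2 * q) * M) ^ (1 / 2 : ℝ) ≤
      3 ^ q * M ^ (1 / 2 : ℝ) * (m : ℝ≥0∞) ^ (-2 : ℝ) := by
  have hm0 : (m : ℝ≥0∞) ≠ 0 := by exact_mod_cast hm
  have h3m : ((2 * m + 1 : ℕ) : ℝ≥0∞) ≤ 3 * m := by exact_mod_cast (by omega : 2 * m + 1 ≤ 3 * m)
  calc (m : ℝ≥0∞) ^ (-(q + 2)) * (((2 * m + 1 : ℕ) : ℝ≥0∞) ^ (2 * q) * M) ^ (1 / 2 : ℝ)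
      = (m : ℝ≥0∞) ^ (-(q + 2)) * (((2 * m + 1 : ℕ) : ℝ≥0∞) ^ q * M ^ (1 / 2 : ℝ)) := by
        rw [ENNReal.mul_rpow_of_nonneg _ _ (by norm_num), ← ENNReal.rpow_mul]
        ring_nf
    _ ≤ (m : ℝ≥0∞) ^ (-(q + 2)) * ((3 * m) ^ q * M ^ (1 / 2 : ℝ)) := by gcongr
    _ = 3 ^ q * M ^ (1 / 2 : ℝ) * ((m : ℝ≥0∞) ^ (-(q + 2)) * (m : ℝ≥0∞) ^ q) := by
        rw [ENNReal.mul_rpow_of_nonneg _ _ hq]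
        ring
    _ = 3 ^ q * M ^ (1 / 2 : ℝ) * (m : ℝ≥0∞) ^ (-2 : ℝ) := by
        rw [← ENNReal.rpow_add _ _ hm0 (ENNReal.natCast_ne_top m), show -(q + 2) + q = -2 by ring]

theorem lintegral_rpow_sum_range_two_mul_add_one_le {lam q : ℝ} (hlam : 0 < lam) (hq : 1 ≤ q)
    {t : ℕ → Ω → ℝ} (ht : ∀ k, Measurable (t k)) (hmap : ∀ k, μ.map (t k) = expMeasure lam)
    {ℓ : Ω → ℕ} (hℓ : Measurable ℓ) (hℓ1 : ∀ ω, 1 ≤ ℓ ω) :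
    ∫⁻ ω, (∑ i ∈ Finset.range (2 * ℓ ω + 1), ENNReal.ofReal (t i ω)) ^ q ∂μ ≤
      3 ^ q * ENNReal.ofReal (Real.Gamma (2 * q + 1) / lam ^ (2 * q)) ^ (1 / 2 : ℝ) *
        (∑' n : ℕ, ((n : ℝ≥0∞) + 1) ^ (-2 : ℝ)) *
        (∫⁻ ω, (ℓ ω : ℝ≥0∞) ^ (2 * (q + 2)) ∂μ) ^ (1 / 2 : ℝ) := by
  set M := ENNReal.ofReal (Real.Gamma (2 * q + 1) / lam ^ (2 * q))
  set A := ∫⁻ ω, (ℓ ω : ℝ≥0∞) ^ (2 * (q + 2)) ∂μ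
  set F : ℕ → Ω → ℝ≥0∞ := fun m ω => (∑ i ∈ Finset.range (2 * m + 1), ENNReal.ofReal (t i ω)) ^ q
  have hF : ∀ m, AEMeasurable (F m) μ := fun m =>
    ((Finset.measurable_sum _ fun i _ => (ht i).ennreal_ofReal).pow_const q).aemeasurable
  have hF2 : ∀ m, ∫⁻ ω, F m ω ^ (2 : ℝ) ∂μ ≤ ((2 * m + 1 : ℕ) : ℝ≥0∞) ^ (2 * q) * M := fun m => by
    simp only [F, ← ENNReal.rpow_mul, mul_comm q 2]
    exact lintegral_rpow_sum_ofReal_le_of_map_eq_expMeasure hlam (by linarith) ht hmap _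
  rw [lintegral_comp_eq_tsum_indicator hF hℓ hℓ1, mul_comm, ← ENNReal.tsum_mul_left,
    ← ENNReal.tsum_mul_left]
  refine ENNReal.tsum_le_tsum fun n => ?_
  calc ∫⁻ ω, (ℓ ⁻¹' {n + 1}).indicator (F (n + 1)) ω ∂μ
      ≤ ((n + 1 : ℕ) : ℝ≥0∞) ^ (-(q + 2)) * A ^ (1 / 2 : ℝ) *
          (∫⁻ ω, F (n + 1) ω ^ (2 : ℝ) ∂μ) ^ (1 / 2 : ℝ) :=
        lintegral_indicator_preimage_singleton_le hℓ (hF _) n.succ_ne_zero _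
    _ = A ^ (1 / 2 : ℝ) * (((n + 1 : ℕ) : ℝ≥0∞) ^ (-(q + 2)) *
          (∫⁻ ω, F (n + 1) ω ^ (2 : ℝ) ∂μ) ^ (1 / 2 : ℝ)) := by ring
    _ ≤ A ^ (1 / 2 : ℝ) * (((n + 1 : ℕ) : ℝ≥0∞) ^ (-(q + 2)) *
          (((2 * (n + 1) + 1 : ℕ) : ℝ≥0∞) ^ (2 * q) * M) ^ (1 / 2 : ℝ)) := by
        gcongr
        exact hF2 _
    _ ≤ A ^ (1 / 2 : ℝ) * (3 ^ q * M ^ (1 / 2 : ℝ) * ((n : ℝ≥0∞) + 1) ^ (-2 : ℝ)) := by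
        have h := natCast_rpow_neg_mul_rpow_le (by linarith) (m := n + 1) n.succ_ne_zero M
        push_cast at h ⊢
        exact mul_le_mul_right h _

end Moments

/-- If `(t_k)` are i.i.d. exponential of rate `λ` (indexed here so that `t k` is `t_{k+1}`,
`τ_m = ∑_{i<m} t_i`), and `ℓ` is a positive-integer-valued random variable with
`E ℓ^{2(q+2)} < ∞`, then `E τ_{2ℓ+1}^q < ∞`; more precisely
`E τ_{2ℓ+1}^q ≤ C (1 + (E ℓ^{2(q+2)})^{1/2})` for a constant `C` depending only on `λ, q`. -/
theorem stmt6 (lam q : ℝ) (hlam : 0 < lam) (hq : 1 ≤ q) :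
    ∃ C : ℝ, 0 < C ∧
      ∀ (Ω : Type) (mΩ : MeasurableSpace Ω) (μ : Measure Ω), IsProbabilityMeasure μ →
        ∀ t : ℕ → Ω → ℝ, (∀ k, Measurable (t k)) →
          iIndepFun t μ →
          (∀ k, μ.map (t k) = expMeasure lam) →
          ∀ ℓ : Ω → ℕ, Measurable ℓ → (∀ ω, 1 ≤ ℓ ω) →
            (∫⁻ ω, (ℓ ω : ENNReal) ^ (2 * (q + 2)) ∂μ) < ⊤ →
            (∫⁻ ω, ENNReal.ofReal ((∑ i ∈ Finset.range (2 * ℓ ω + 1), t i ω) ^ q) ∂μ) < ⊤ ∧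
            (∫⁻ ω, ENNReal.ofReal ((∑ i ∈ Finset.range (2 * ℓ ω + 1), t i ω) ^ q) ∂μ) ≤
              ENNReal.ofReal C *
                (1 + (∫⁻ ω, (ℓ ω : ENNReal) ^ (2 * (q + 2)) ∂μ) ^ ((1 : ℝ) / 2)) := by
  set K : ℝ≥0∞ := 3 ^ q * ENNReal.ofReal (Real.Gamma (2 * q + 1) / lam ^ (2 * q)) ^ (1 / 2 : ℝ) *
    ∑' n : ℕ, ((n : ℝ≥0∞) + 1) ^ (-2 : ℝ)
  have hK : K ≠ ⊤ := by
    have := ENNReal.tsum_natCast_add_one_rpow_neg_ne_top one_lt_two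
    finiteness
  refine ⟨K.toReal + 1, by positivity, fun Ω _ μ _ t ht _ hmap ℓ hℓ hℓ1 hA => ?_⟩
  have hτ_nonneg : ∀ᵐ ω ∂μ, ∀ k, 0 ≤ t k ω :=
    ae_all_iff.2 fun k => ae_nonneg_of_map_eq_expMeasure (ht k).aemeasurable (hmap k)
  have hbound : ∫⁻ ω, ENNReal.ofReal ((∑ i ∈ Finset.range (2 * ℓ ω + 1), t i ω) ^ q) ∂μ ≤
      ENNReal.ofReal (K.toReal + 1) *
        (1 + (∫⁻ ω, (ℓ ω : ℝ≥0∞) ^ (2 * (q + 2)) ∂μ) ^ ((1 : ℝ) / 2)) := calc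
    _ = ∫⁻ ω, (∑ i ∈ Finset.range (2 * ℓ ω + 1), ENNReal.ofReal (t i ω)) ^ q ∂μ :=
        lintegral_congr_ae <| hτ_nonneg.mono fun ω hω =>
          ENNReal.ofReal_sum_rpow (fun i _ => hω i) (by linarith)
    _ ≤ K * (∫⁻ ω, (ℓ ω : ℝ≥0∞) ^ (2 * (q + 2)) ∂μ) ^ ((1 : ℝ) / 2) :=
        lintegral_rpow_sum_range_two_mul_add_one_le hlam hq ht hmap hℓ hℓ1
    _ ≤ _ := by
        gcongr
        · exact (ENNReal.le_ofReal_iff_toReal_le hK (by positivity)).2 (by linarith)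
        · exact le_add_self
  refine ⟨hbound.trans_lt ?_, hbound⟩
  have := hA.ne
  finiteness
end

section
/- Let A, G, E be events on a probability space and let q ∈ (0,1]. Assume that A ∩ Eᶜ = G ∩ Eᶜ, that P(A) ≥ q and P(G) ≥ q, and that P(A ∩ G ∩ E) ≥ P(A ∩ E) · P(G ∩ E). Then P(A ∩ G) ≥ (q/2)². -/
/-!
Put `x = P(A ∩ Eᶜ) = P(G ∩ Eᶜ)`. Since `A ∩ G` contains `A ∩ Eᶜ` and `A ∩ G ∩ E`, we get
`P(A ∩ G) ≥ x + P(A ∩ E) P(G ∩ E)`. If `x ≥ (q/2)²` we are done; otherwise both `P(A ∩ E)` and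
`P(G ∩ E)` are at least `q - (q/2)²`, and `(q - (q/2)²)² ≥ (q/2)²` for `q ∈ (0, 1]`.
-/

open MeasureTheory

namespace MeasureTheory

variable {Ω : Type*} [MeasurableSpace Ω] {μ : Measure Ω} {A G E : Set Ω}

theorem measure_compl_add_mul_le_measure_inter (hE : MeasurableSet E)
    (hAG : A ∩ Eᶜ = G ∩ Eᶜ) (hprod : μ (A ∩ E) * μ (G ∩ E) ≤ μ (A ∩ G ∩ E)) :
    μ (A ∩ Eᶜ) + μ (A ∩ E) * μ (G ∩ E) ≤ μ (A ∩ G) := by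
  have hcompl : A ∩ G ∩ Eᶜ = A ∩ Eᶜ := by
    rw [Set.inter_assoc, ← hAG, ← Set.inter_assoc, Set.inter_self]
  calc μ (A ∩ Eᶜ) + μ (A ∩ E) * μ (G ∩ E)
      ≤ μ (A ∩ G ∩ E) + μ (A ∩ G ∩ Eᶜ) := by rw [hcompl, add_comm]; gcongr
    _ = μ (A ∩ G) := measure_inter_add_sdiff _ hE

theorem ofReal_sub_le_measure_inter {q r : ℝ} (hr : 0 ≤ r) (hE : MeasurableSet E)
    (hA : ENNReal.ofReal q ≤ μ A) (hAE : μ (A ∩ Eᶜ) ≤ ENNReal.ofReal r) :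
    ENNReal.ofReal (q - r) ≤ μ (A ∩ E) := by
  rw [ENNReal.ofReal_sub _ hr, tsub_le_iff_right]
  calc ENNReal.ofReal q ≤ μ A := hA
    _ = μ (A ∩ E) + μ (A ∩ Eᶜ) := (measure_inter_add_sdiff A hE).symm
    _ ≤ μ (A ∩ E) + ENNReal.ofReal r := by gcongr

end MeasureTheory

theorem sq_half_le_sq_sub_sq_half {q : ℝ} (hq : q ≤ 1) :
    (q / 2) ^ 2 ≤ (q - (q / 2) ^ 2) ^ 2 := by
  nlinarith [sq_nonneg q, sq_nonneg (q - 2), mul_nonneg (sq_nonneg q) (sub_nonneg.2 hq)]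

theorem stmt7_general {Ω : Type*} [MeasurableSpace Ω] (μ : Measure Ω)
    (A G E : Set Ω) (hE : MeasurableSet E)
    (q : ℝ) (hq0 : 0 < q) (hq1 : q ≤ 1)
    (hAG : A ∩ Eᶜ = G ∩ Eᶜ)
    (hPA : ENNReal.ofReal q ≤ μ A) (hPG : ENNReal.ofReal q ≤ μ G)
    (hprod : μ (A ∩ E) * μ (G ∩ E) ≤ μ (A ∩ G ∩ E)) :
    ENNReal.ofReal ((q / 2) ^ 2) ≤ μ (A ∩ G) := by
  have key := measure_compl_add_mul_le_measure_inter hE hAG hprod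
  rcases le_or_gt (ENNReal.ofReal ((q / 2) ^ 2)) (μ (A ∩ Eᶜ)) with hx | hx
  · exact hx.trans (le_self_add.trans key)
  have hr : 0 ≤ (q / 2) ^ 2 := sq_nonneg _
  have hAE := ofReal_sub_le_measure_inter hr hE hPA hx.le
  have hGE := ofReal_sub_le_measure_inter hr hE hPG (hAG ▸ hx.le)
  calc ENNReal.ofReal ((q / 2) ^ 2)
      ≤ ENNReal.ofReal ((q - (q / 2) ^ 2) ^ 2) :=
        ENNReal.ofReal_le_ofReal (sq_half_le_sq_sub_sq_half hq1)
    _ = ENNReal.ofReal (q - (q / 2) ^ 2) * ENNReal.ofReal (q - (q / 2) ^ 2) := by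
        rw [sq, ENNReal.ofReal_mul (by nlinarith)]
    _ ≤ μ (A ∩ E) * μ (G ∩ E) := by gcongr
    _ ≤ μ (A ∩ G) := le_add_self.trans key

/-- An elementary event estimate (Step 4 of Lemma 5.2): if `A ∩ Eᶜ = G ∩ Eᶜ`,
`P(A) ≥ q`, `P(G) ≥ q` and `P(A ∩ G ∩ E) ≥ P(A ∩ E) P(G ∩ E)`, then
`P(A ∩ G) ≥ (q/2)²`. -/
theorem stmt7 {Ω : Type*} [MeasurableSpace Ω] (μ : Measure Ω) [IsProbabilityMeasure μ]
    (A G E : Set Ω) (hA : MeasurableSet A) (hG : MeasurableSet G) (hE : MeasurableSet E)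
    (q : ℝ) (hq0 : 0 < q) (hq1 : q ≤ 1)
    (hAG : A ∩ Eᶜ = G ∩ Eᶜ)
    (hPA : ENNReal.ofReal q ≤ μ A) (hPG : ENNReal.ofReal q ≤ μ G)
    (hprod : μ (A ∩ E) * μ (G ∩ E) ≤ μ (A ∩ G ∩ E)) :
    ENNReal.ofReal ((q / 2) ^ 2) ≤ μ (A ∩ G) :=
  stmt7_general μ A G E hE q hq0 hq1 hAG hPA hPG hprod
end
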